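/- Continuity of the minimum causal effect: let N and N' be quantum channels from a d_A-dimensional system A (with d_A ≥ 2) to a d_B-dimensional system B. If ‖N(ρ) − N'(ρ)‖₁ ≤ ε for every density matrix ρ on A, then |CE_min(N) − CE_min(N')| ≤ ε. -/

import Mathlib

open Matrix ComplexOrder

/-- Trace norm of a square complex matrix. -/
noncomputable def traceNorm {n : Type*} [Fintype n] [DecidableEq n]
    (X : Matrix n n ℂ) : ℝ :=
  (((Matrix.posSemidef_conjTranspose_mul_self X).1.eigenvectorUnitary : Matrix n n ℂ) *
      diagonal (((↑) : ℝ → ℂ) ∘ Real.sqrt ∘ (Matrix.posSemidef_conjTranspose_mul_self X).1.eigenvalues) *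
      (star (Matrix.posSemidef_conjTranspose_mul_self X).1.eigenvectorUnitary : Matrix n n ℂ)).trace.re

/-- A density matrix: positive semidefinite with unit trace. -/
def IsDensityMatrix {n : Type*} [Fintype n] [DecidableEq n] (ρ : Matrix n n ℂ) : Prop :=
  ρ.PosSemidef ∧ ρ.trace = 1

/-- A quantum channel: a linear map admitting a Kraus representation. -/
def IsQuantumChannel {dA dB : ℕ}
    (N : Matrix (Fin dA) (Fin dA) ℂ →ₗ[ℂ] Matrix (Fin dB) (Fin dB) ℂ) : Prop :=
  ∃ (k : ℕ) (K : Fin k → Matrix (Fin dB) (Fin dA) ℂ),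
    (∀ X, N X = ∑ i, K i * X * (K i)ᴴ) ∧ (∑ i, (K i)ᴴ * K i = 1)

/-- Maximum causal effect. -/
noncomputable def CEmax {dA dB : ℕ}
    (N : Matrix (Fin dA) (Fin dA) ℂ →ₗ[ℂ] Matrix (Fin dB) (Fin dB) ℂ) : ℝ :=
  sSup {x : ℝ | ∃ ρ ρ' : Matrix (Fin dA) (Fin dA) ℂ,
    IsDensityMatrix ρ ∧ IsDensityMatrix ρ' ∧ ρ ≠ ρ' ∧
    x = traceNorm (N ρ - N ρ') / traceNorm (ρ - ρ')}

/-- Minimum causal effect. -/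
noncomputable def CEmin {dA dB : ℕ}
    (N : Matrix (Fin dA) (Fin dA) ℂ →ₗ[ℂ] Matrix (Fin dB) (Fin dB) ℂ) : ℝ :=
  sInf {x : ℝ | ∃ ρ ρ' : Matrix (Fin dA) (Fin dA) ℂ,
    IsDensityMatrix ρ ∧ IsDensityMatrix ρ' ∧ ρ ≠ ρ' ∧
    x = traceNorm (N ρ - N ρ') / traceNorm (ρ - ρ')}

/-- Minimum distinguishability preservation. -/
noncomputable def DPmin {dA dB : ℕ}
    (N : Matrix (Fin dA) (Fin dA) ℂ →ₗ[ℂ] Matrix (Fin dB) (Fin dB) ℂ) : ℝ :=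
  sInf {x : ℝ | ∃ p : ℝ, 0 ≤ p ∧ p ≤ 1 ∧
    ∃ ρ ρ' : Matrix (Fin dA) (Fin dA) ℂ,
      IsDensityMatrix ρ ∧ IsDensityMatrix ρ' ∧ ρ ≠ ρ' ∧
      x = traceNorm ((p : ℂ) • N ρ - ((1 - p : ℝ) : ℂ) • N ρ') /
          traceNorm ((p : ℂ) • ρ - ((1 - p : ℝ) : ℂ) • ρ')}


/-!
For Hermitian `X` with Jordan decomposition `X = X⁺ - X⁻` one has `‖X‖₁ = tr X⁺ + tr X⁻`, and
`‖P - Q‖₁ ≤ tr P + tr Q` for any positive `P, Q` (compare diagonals in an eigenbasis of `P - Q`);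
together these give the triangle inequality on Hermitian matrices. Writing `X = X⁺ - X⁻` and
rescaling `X^±` to states, closeness of `N` and `N'` on states upgrades to
`‖(N - N') X‖₁ ≤ ε ‖X‖₁` for every Hermitian `X`. Applied to `X = ρ - ρ'`, this shifts every ratio
in the infimum defining `CEmin N` by at most `ε` from the corresponding ratio for `N'`.
-/

open scoped MatrixOrder

section TraceNorm

variable {n : Type*} [Fintype n] [DecidableEq n]

lemma Matrix.trace_conjStarAlgAut {𝕜 : Type*} [RCLike 𝕜] (U : unitary (Matrix n n 𝕜))
    (A : Matrix n n 𝕜) : (Unitary.conjStarAlgAut 𝕜 _ U A).trace = A.trace := by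
  rw [Unitary.conjStarAlgAut_apply, trace_mul_cycle, Unitary.coe_star_mul_self, one_mul]

lemma Matrix.IsHermitian.trace_cfc {𝕜 : Type*} [RCLike 𝕜] {A : Matrix n n 𝕜} (hA : A.IsHermitian)
    (f : ℝ → ℝ) : (cfc f A).trace = ∑ i, (f (hA.eigenvalues i) : 𝕜) := by
  rw [hA.cfc_eq, IsHermitian.cfc, trace_conjStarAlgAut, trace_diagonal]
  rfl

omit [DecidableEq n] in
lemma Matrix.PosSemidef.ofReal_re_trace {A : Matrix n n ℂ} (hA : A.PosSemidef) :
    (A.trace.re : ℂ) = A.trace :=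
  Complex.ext rfl (Complex.nonneg_iff.mp hA.trace_nonneg).2

lemma traceNorm_eq_re_trace_abs (X : Matrix n n ℂ) : traceNorm X = (CFC.abs X).trace.re := by
  have hXX := posSemidef_conjTranspose_mul_self X
  rw [CFC.abs, star_eq_conjTranspose, CFC.sqrt_eq_real_sqrt _ hXX.nonneg, cfcₙ_eq_cfc,
    hXX.1.cfc_eq]
  rfl

lemma traceNorm_nonneg (X : Matrix n n ℂ) : 0 ≤ traceNorm X := by
  rw [traceNorm_eq_re_trace_abs]
  exact (Complex.nonneg_iff.mp (CFC.abs_nonneg X).posSemidef.trace_nonneg).1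

lemma traceNorm_eq_zero_iff {X : Matrix n n ℂ} : traceNorm X = 0 ↔ X = 0 := by
  have habs := (CFC.abs_nonneg X).posSemidef
  rw [traceNorm_eq_re_trace_abs, ← Complex.ofReal_inj, habs.ofReal_re_trace, Complex.ofReal_zero,
    habs.trace_eq_zero_iff]
  constructor
  · intro h
    rw [← conjTranspose_mul_self_eq_zero, ← star_eq_conjTranspose, ← CFC.abs_mul_abs, h, mul_zero]
  · rintro rfl
    exact CFC.abs_zero

lemma traceNorm_pos {X : Matrix n n ℂ} (hX : X ≠ 0) : 0 < traceNorm X :=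
  (traceNorm_nonneg X).lt_of_ne (Ne.symm (traceNorm_eq_zero_iff.not.mpr hX))

@[simp]
lemma traceNorm_zero : traceNorm (0 : Matrix n n ℂ) = 0 := traceNorm_eq_zero_iff.mpr rfl

lemma traceNorm_smul (c : ℝ) (X : Matrix n n ℂ) : traceNorm (c • X) = |c| * traceNorm X := by
  simp [traceNorm_eq_re_trace_abs, CFC.abs_smul]

@[simp]
lemma traceNorm_neg (X : Matrix n n ℂ) : traceNorm (-X) = traceNorm X := by
  simp [traceNorm_eq_re_trace_abs]

lemma Matrix.IsHermitian.traceNorm_eq_sum_abs_eigenvalues {X : Matrix n n ℂ}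
    (hX : X.IsHermitian) : traceNorm X = ∑ i, |hX.eigenvalues i| := by
  rw [traceNorm_eq_re_trace_abs, CFC.abs_eq_cfc_norm X hX.isSelfAdjoint, hX.trace_cfc]
  simp

lemma Matrix.IsHermitian.traceNorm_eq_re_trace_posPart_add_re_trace_negPart
    {X : Matrix n n ℂ} (hX : X.IsHermitian) :
    traceNorm X = (X⁺).trace.re + (X⁻).trace.re := by
  rw [traceNorm_eq_re_trace_abs, ← CFC.posPart_add_negPart X hX.isSelfAdjoint, trace_add,
    Complex.add_re]

lemma traceNorm_sub_le_re_trace_add_re_trace {P Q : Matrix n n ℂ} (hP : P.PosSemidef)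
    (hQ : Q.PosSemidef) : traceNorm (P - Q) ≤ P.trace.re + Q.trace.re := by
  have hX : (P - Q).IsHermitian := hP.1.sub hQ.1
  set conj := Unitary.conjStarAlgAut ℂ (Matrix n n ℂ) (star hX.eigenvectorUnitary)
  have hconj : ∀ {A : Matrix n n ℂ}, A.PosSemidef → ∀ i, 0 ≤ (conj A i i).re := fun hA i =>
    (Complex.nonneg_iff.mp (star_right_conjugate_nonneg hA.nonneg _).posSemidef.diag_nonneg).1
  have hdiag : ∀ i, hX.eigenvalues i = (conj P i i).re - (conj Q i i).re := fun i => by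
    simpa using congrArg Complex.re
      (congrFun₂ (hX.conjStarAlgAut_star_eigenvectorUnitary.symm.trans (map_sub conj P Q)) i i)
  calc traceNorm (P - Q) = ∑ i, |hX.eigenvalues i| := hX.traceNorm_eq_sum_abs_eigenvalues
    _ ≤ ∑ i, ((conj P i i).re + (conj Q i i).re) := Finset.sum_le_sum fun i _ => by
        rw [hdiag, abs_le]
        constructor <;> linarith [hconj hP i, hconj hQ i]
    _ = P.trace.re + Q.trace.re := by
        rw [← trace_conjStarAlgAut (star hX.eigenvectorUnitary) P,
          ← trace_conjStarAlgAut (star hX.eigenvectorUnitary) Q, trace, trace, Complex.re_sum,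
          Complex.re_sum, Finset.sum_add_distrib]
        rfl

lemma Matrix.IsHermitian.traceNorm_add_le {A B : Matrix n n ℂ} (hA : A.IsHermitian)
    (hB : B.IsHermitian) : traceNorm (A + B) ≤ traceNorm A + traceNorm B := by
  have hAB : A + B = (A⁺ + B⁺) - (A⁻ + B⁻) := by
    conv_lhs => rw [← CFC.posPart_sub_negPart A hA.isSelfAdjoint,
      ← CFC.posPart_sub_negPart B hB.isSelfAdjoint]
    abel
  calc traceNorm (A + B) ≤ (A⁺ + B⁺).trace.re + (A⁻ + B⁻).trace.re := hAB ▸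
        traceNorm_sub_le_re_trace_add_re_trace
          ((CFC.posPart_nonneg A).posSemidef.add (CFC.posPart_nonneg B).posSemidef)
          ((CFC.negPart_nonneg A).posSemidef.add (CFC.negPart_nonneg B).posSemidef)
    _ = traceNorm A + traceNorm B := by
        rw [hA.traceNorm_eq_re_trace_posPart_add_re_trace_negPart,
          hB.traceNorm_eq_re_trace_posPart_add_re_trace_negPart, trace_add, trace_add,
          Complex.add_re, Complex.add_re]
        ring

lemma Matrix.IsHermitian.traceNorm_sub_le {A B : Matrix n n ℂ} (hA : A.IsHermitian)
    (hB : B.IsHermitian) : traceNorm (A - B) ≤ traceNorm A + traceNorm B := by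
  simpa [sub_eq_add_neg] using hA.traceNorm_add_le hB.neg

end TraceNorm

section HermiticityPreservingMaps

variable {n m : Type*} [Fintype n] [DecidableEq n] [Fintype m] [DecidableEq m]
  {Φ : Matrix n n ℂ →ₗ[ℂ] Matrix m m ℂ} {ε : ℝ}

lemma traceNorm_map_le_mul_re_trace_of_posSemidef
    (hΦε : ∀ ρ, IsDensityMatrix ρ → traceNorm (Φ ρ) ≤ ε) {P : Matrix n n ℂ} (hP : P.PosSemidef) :
    traceNorm (Φ P) ≤ ε * P.trace.re := by
  rcases eq_or_ne P 0 with rfl | hP0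
  · simp
  set t := P.trace.re
  have htrace : (t : ℂ) = P.trace := hP.ofReal_re_trace
  have ht : 0 < t := (Complex.nonneg_iff.mp hP.trace_nonneg).1.lt_of_ne' fun h =>
    hP0 (hP.trace_eq_zero_iff.mp (by rw [← htrace]; exact_mod_cast h))
  have hρ : IsDensityMatrix (t⁻¹ • P) := by
    refine ⟨hP.smul (inv_nonneg.mpr ht.le), ?_⟩
    rw [trace_smul, ← htrace, Complex.real_smul, ← Complex.ofReal_mul, inv_mul_cancel₀ ht.ne',
      Complex.ofReal_one]
  calc traceNorm (Φ P) = t * traceNorm (Φ (t⁻¹ • P)) := by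
        rw [LinearMap.map_smul_of_tower, traceNorm_smul, abs_inv, abs_of_pos ht, ← mul_assoc,
          mul_inv_cancel₀ ht.ne', one_mul]
    _ ≤ ε * t := by rw [mul_comm]; exact mul_le_mul_of_nonneg_right (hΦε _ hρ) ht.le

lemma traceNorm_map_le_mul_traceNorm
    (hΦ : ∀ X : Matrix n n ℂ, X.IsHermitian → (Φ X).IsHermitian)
    (hΦε : ∀ ρ, IsDensityMatrix ρ → traceNorm (Φ ρ) ≤ ε) {X : Matrix n n ℂ} (hX : X.IsHermitian) :
    traceNorm (Φ X) ≤ ε * traceNorm X := by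
  have hpos := (CFC.posPart_nonneg X).posSemidef
  have hneg := (CFC.negPart_nonneg X).posSemidef
  calc traceNorm (Φ X) = traceNorm (Φ X⁺ - Φ X⁻) := by
        rw [← map_sub, CFC.posPart_sub_negPart X hX.isSelfAdjoint]
    _ ≤ traceNorm (Φ X⁺) + traceNorm (Φ X⁻) := (hΦ _ hpos.1).traceNorm_sub_le (hΦ _ hneg.1)
    _ ≤ ε * (X⁺).trace.re + ε * (X⁻).trace.re := add_le_add
        (traceNorm_map_le_mul_re_trace_of_posSemidef hΦε hpos)
        (traceNorm_map_le_mul_re_trace_of_posSemidef hΦε hneg)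
    _ = ε * traceNorm X := by rw [hX.traceNorm_eq_re_trace_posPart_add_re_trace_negPart, mul_add]

end HermiticityPreservingMaps

lemma isDensityMatrix_diagonal_single {n : Type*} [Fintype n] [DecidableEq n] (i : n) :
    IsDensityMatrix (diagonal (Pi.single i (1 : ℂ))) :=
  ⟨posSemidef_diagonal_iff.mpr (Pi.single_nonneg.mpr zero_le_one), by simp⟩

section Channels

variable {dA dB : ℕ} {N N' : Matrix (Fin dA) (Fin dA) ℂ →ₗ[ℂ] Matrix (Fin dB) (Fin dB) ℂ}

lemma IsQuantumChannel.isHermitian_map (hN : IsQuantumChannel N)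
    {X : Matrix (Fin dA) (Fin dA) ℂ} (hX : X.IsHermitian) : (N X).IsHermitian := by
  obtain ⟨k, K, hK, -⟩ := hN
  rw [hK]
  exact isSelfAdjoint_sum _ fun i _ => isHermitian_mul_mul_conjTranspose (K i) hX

lemma exists_isDensityMatrix_ne (hdA : 2 ≤ dA) :
    ∃ ρ ρ' : Matrix (Fin dA) (Fin dA) ℂ, IsDensityMatrix ρ ∧ IsDensityMatrix ρ' ∧ ρ ≠ ρ' := by
  let i₀ : Fin dA := ⟨0, by omega⟩
  let i₁ : Fin dA := ⟨1, by omega⟩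
  have h₀₁ : i₀ ≠ i₁ := by simp [i₀, i₁]
  refine ⟨_, _, isDensityMatrix_diagonal_single i₀, isDensityMatrix_diagonal_single i₁,
    fun h => ?_⟩
  simpa [h₀₁] using congrFun₂ h i₀ i₀

lemma IsQuantumChannel.traceNorm_map_le_add (hN : IsQuantumChannel N)
    (hN' : IsQuantumChannel N') {ε : ℝ}
    (hclose : ∀ ρ, IsDensityMatrix ρ → traceNorm (N ρ - N' ρ) ≤ ε)
    {X : Matrix (Fin dA) (Fin dA) ℂ} (hX : X.IsHermitian) :
    traceNorm (N X) ≤ traceNorm (N' X) + ε * traceNorm X := by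
  have hdiff : ∀ Y : Matrix (Fin dA) (Fin dA) ℂ, Y.IsHermitian → ((N - N') Y).IsHermitian :=
    fun Y hY => (hN.isHermitian_map hY).sub (hN'.isHermitian_map hY)
  calc traceNorm (N X) = traceNorm (N' X + (N - N') X) := by
        rw [LinearMap.sub_apply, add_sub_cancel]
    _ ≤ traceNorm (N' X) + traceNorm ((N - N') X) :=
        (hN'.isHermitian_map hX).traceNorm_add_le (hdiff X hX)
    _ ≤ traceNorm (N' X) + ε * traceNorm X := by
        gcongr
        exact traceNorm_map_le_mul_traceNorm hdiff hclose hX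

lemma CEmin_le_CEmin_add (hdA : 2 ≤ dA) {ε : ℝ} (hN : IsQuantumChannel N)
    (hN' : IsQuantumChannel N')
    (hclose : ∀ ρ, IsDensityMatrix ρ → traceNorm (N ρ - N' ρ) ≤ ε) :
    CEmin N ≤ CEmin N' + ε := by
  obtain ⟨ρ₀, ρ₁, hρ₀, hρ₁, hne₀₁⟩ := exists_isDensityMatrix_ne hdA
  rw [← sub_le_iff_le_add]
  refine le_csInf ⟨_, ρ₀, ρ₁, hρ₀, hρ₁, hne₀₁, rfl⟩ ?_
  rintro _ ⟨ρ, ρ', hρ, hρ', hne, rfl⟩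
  have hδpos : 0 < traceNorm (ρ - ρ') := traceNorm_pos (sub_ne_zero.mpr hne)
  have hbound := hN.traceNorm_map_le_add hN' hclose (hρ.1.1.sub hρ'.1.1)
  have hCEmin : CEmin N ≤ traceNorm (N ρ - N ρ') / traceNorm (ρ - ρ') :=
    csInf_le
      ⟨0, by rintro _ ⟨_, _, _, _, _, rfl⟩; exact div_nonneg (traceNorm_nonneg _) (traceNorm_nonneg _)⟩
      ⟨ρ, ρ', hρ, hρ', hne, rfl⟩
  rw [map_sub, map_sub] at hbound
  rw [le_div_iff₀ hδpos] at hCEmin ⊢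
  linarith

end Channels

/-- **Continuity of the minimum causal effect.**
If two quantum channels `N, N' : A → B` (`dA ≥ 2`) satisfy `‖N ρ − N' ρ‖₁ ≤ ε` for every
density matrix `ρ`, then `|CEmin N − CEmin N'| ≤ ε`. -/
theorem CEmin_continuity {dA dB : ℕ} (hdA : 2 ≤ dA) (ε : ℝ)
    (N N' : Matrix (Fin dA) (Fin dA) ℂ →ₗ[ℂ] Matrix (Fin dB) (Fin dB) ℂ)
    (hN : IsQuantumChannel N) (hN' : IsQuantumChannel N')
    (hclose : ∀ ρ : Matrix (Fin dA) (Fin dA) ℂ, IsDensityMatrix ρ →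
      traceNorm (N ρ - N' ρ) ≤ ε) :
    |CEmin N - CEmin N'| ≤ ε := by
  have hclose' : ∀ ρ, IsDensityMatrix ρ → traceNorm (N' ρ - N ρ) ≤ ε := fun ρ hρ => by
    simpa only [← neg_sub (N ρ), traceNorm_neg] using hclose ρ hρ
  rw [abs_sub_le_iff, sub_le_iff_le_add', sub_le_iff_le_add']
  exact ⟨CEmin_le_CEmin_add hdA hN hN' hclose, CEmin_le_CEmin_add hdA hN' hN hclose'⟩
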